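/- Let f = T₂ ∘ ρ ∘ T₁ be a two-layer MLP where T₁(x) = M₁x + b₁, T₂(x) = M₂x + b₂, and ρ is the coordinatewise ReLU. Then Lip(f) ≤ max over σ ∈ [0,1]^l of ‖M₂ diag(σ) M₁‖₂, where l is the number of hidden units. -/

import Mathlib

open Matrix

/-- The (optimal) Lipschitz constant. -/
noncomputable def lipConst {E F : Type*} [NormedAddCommGroup E] [NormedAddCommGroup F]
    (f : E → F) : ℝ :=
  sInf {L : ℝ | 0 ≤ L ∧ ∀ x y, ‖f x - f y‖ ≤ L * ‖x - y‖}

/-- The spectral (operator) norm of a real matrix. -/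
noncomputable def specNorm {m n : ℕ} (M : Matrix (Fin m) (Fin n) ℝ) : ℝ :=
  ‖LinearMap.toContinuousLinearMap (Matrix.toEuclideanLin M)‖

/-- Coordinatewise ReLU on Euclidean space. -/
def relu {l : ℕ} (x : EuclideanSpace ℝ (Fin l)) : EuclideanSpace ℝ (Fin l) :=
  WithLp.toLp 2 (fun i => max (x i) 0)

lemma relu_slope (s t : ℝ) :
    ∃ σ : ℝ, σ ∈ Set.Icc (0 : ℝ) 1 ∧ max s 0 - max t 0 = σ * (s - t) := by
  rcases eq_or_ne s t with h | h
  · exact ⟨0, ⟨le_refl 0, zero_le_one⟩, by simp [h]⟩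
  · refine ⟨(max s 0 - max t 0) / (s - t), ?_, (div_mul_cancel₀ _ (sub_ne_zero.mpr h)).symm⟩
    have key : ∀ u v : ℝ, v ≤ u → 0 ≤ max u 0 - max v 0 ∧ max u 0 - max v 0 ≤ u - v := by
      intro u v huv
      constructor
      · have := max_le_max huv (le_refl (0:ℝ)); linarith
      · have : max 0 (-u) ≤ max 0 (-v) := max_le_max (le_refl (0:ℝ)) (by linarith)
        have h1 : max u 0 - u = max 0 (-u) := by rcases le_total u 0 with h' | h' <;> simp [max_eq_left, max_eq_right, h']
        have h2 : max v 0 - v = max 0 (-v) := by rcases le_total v 0 with h' | h' <;> simp [max_eq_left, max_eq_right, h']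
        linarith
    have symm : ∀ u v : ℝ, v < u →
        (max u 0 - max v 0) / (u - v) ∈ Set.Icc (0:ℝ) 1 := by
      intro u v huv
      obtain ⟨h1, h2⟩ := key u v huv.le
      exact ⟨div_nonneg h1 (by linarith), by rw [div_le_one (by linarith)]; linarith⟩
    rcases lt_or_gt_of_ne h with hlt | hlt
    · have : (max s 0 - max t 0) / (s - t) = (max t 0 - max s 0) / (t - s) := by
        rw [← neg_div_neg_eq]; ring_nf
      rw [this]; exact symm t s hlt
    · exact symm s t hlt

lemma diag_norm_le {l : ℕ} (σ : Fin l → ℝ) (hσ : ∀ i, σ i ∈ Set.Icc (0 : ℝ) 1)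
    (v : EuclideanSpace ℝ (Fin l)) :
    ‖Matrix.toEuclideanLin (Matrix.diagonal σ) v‖ ≤ ‖v‖ := by
  rw [EuclideanSpace.norm_eq, EuclideanSpace.norm_eq]
  apply Real.sqrt_le_sqrt
  apply Finset.sum_le_sum
  intro i _
  have hv : (Matrix.toEuclideanLin (Matrix.diagonal σ) v) i = σ i * v i := by
    simp [Matrix.toEuclideanLin_apply, Matrix.mulVec_diagonal]
  rw [hv]
  have h0 := (hσ i).1
  have h1 := (hσ i).2
  have : |σ i * v i| ≤ |v i| := by
    rw [abs_mul]
    calc |σ i| * |v i| ≤ 1 * |v i| := by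
          apply mul_le_mul_of_nonneg_right _ (abs_nonneg _)
          rw [abs_of_nonneg h0]; exact h1
      _ = |v i| := one_mul _
  calc ‖σ i * v i‖ ^ 2 = |σ i * v i| ^ 2 := by rw [Real.norm_eq_abs]
    _ ≤ |v i| ^ 2 := by apply pow_le_pow_left₀ (abs_nonneg _) this
    _ = ‖v i‖ ^ 2 := by rw [Real.norm_eq_abs]

/-- for the two-layer MLP `f = T₂ ∘ ρ ∘ T₁` with coordinatewise ReLU `ρ`,
`Lip(f) ≤ max_{σ ∈ [0,1]^l} ‖M₂ diag(σ) M₁‖₂`. -/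
theorem lipConst_two_layer_le {n l m : ℕ}
    (M₁ : Matrix (Fin l) (Fin n) ℝ) (M₂ : Matrix (Fin m) (Fin l) ℝ)
    (b₁ : EuclideanSpace ℝ (Fin l)) (b₂ : EuclideanSpace ℝ (Fin m)) :
    lipConst (fun x : EuclideanSpace ℝ (Fin n) =>
        Matrix.toEuclideanLin M₂ (relu (Matrix.toEuclideanLin M₁ x + b₁)) + b₂) ≤
      sSup {c : ℝ | ∃ σ : Fin l → ℝ, (∀ i, σ i ∈ Set.Icc (0 : ℝ) 1) ∧
        c = specNorm (M₂ * Matrix.diagonal σ * M₁)} := by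
  set S := {c : ℝ | ∃ σ : Fin l → ℝ, (∀ i, σ i ∈ Set.Icc (0 : ℝ) 1) ∧
      c = specNorm (M₂ * Matrix.diagonal σ * M₁)} with hS
  -- boundedness of S
  have hbdd : BddAbove S := by
    refine ⟨specNorm M₂ * specNorm M₁, ?_⟩
    rintro c ⟨σ, hσ, rfl⟩
    unfold specNorm
    apply ContinuousLinearMap.opNorm_le_bound _
      (mul_nonneg (norm_nonneg _) (norm_nonneg _))
    intro v
    have hcomp : (LinearMap.toContinuousLinearMap
        (Matrix.toEuclideanLin (M₂ * Matrix.diagonal σ * M₁))) v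
        = Matrix.toEuclideanLin M₂
            (Matrix.toEuclideanLin (Matrix.diagonal σ) (Matrix.toEuclideanLin M₁ v)) := by
      simp only [LinearMap.coe_toContinuousLinearMap', Matrix.toEuclideanLin_apply,
        Equiv.apply_symm_apply, Matrix.mulVec_mulVec]
      rw [Matrix.mul_assoc]
    rw [hcomp]
    calc ‖Matrix.toEuclideanLin M₂
            (Matrix.toEuclideanLin (Matrix.diagonal σ) (Matrix.toEuclideanLin M₁ v))‖
        ≤ specNorm M₂ * ‖Matrix.toEuclideanLin (Matrix.diagonal σ)
            (Matrix.toEuclideanLin M₁ v)‖ :=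
          (LinearMap.toContinuousLinearMap (Matrix.toEuclideanLin M₂)).le_opNorm _
      _ ≤ specNorm M₂ * ‖Matrix.toEuclideanLin M₁ v‖ := by
          apply mul_le_mul_of_nonneg_left (diag_norm_le σ hσ _) (norm_nonneg _)
      _ ≤ specNorm M₂ * (specNorm M₁ * ‖v‖) := by
          apply mul_le_mul_of_nonneg_left _ (norm_nonneg _)
          exact (LinearMap.toContinuousLinearMap (Matrix.toEuclideanLin M₁)).le_opNorm _
      _ = specNorm M₂ * specNorm M₁ * ‖v‖ := by ring
  have hmem0 : specNorm (M₂ * Matrix.diagonal (0 : Fin l → ℝ) * M₁) ∈ S :=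
    ⟨0, fun i => ⟨le_refl 0, zero_le_one⟩, rfl⟩
  have hSnonneg : 0 ≤ sSup S :=
    le_trans (norm_nonneg _) (le_csSup hbdd hmem0)
  -- main inequality
  apply csInf_le
  · exact ⟨0, fun L hL => hL.1⟩
  refine ⟨hSnonneg, ?_⟩
  intro x y
  set a := Matrix.toEuclideanLin M₁ x + b₁ with ha
  set b := Matrix.toEuclideanLin M₁ y + b₁ with hb
  choose σ hσmem hσeq using fun i => relu_slope (a i) (b i)
  have hkey : (fun x : EuclideanSpace ℝ (Fin n) =>
        Matrix.toEuclideanLin M₂ (relu (Matrix.toEuclideanLin M₁ x + b₁)) + b₂) x -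
      (fun x : EuclideanSpace ℝ (Fin n) =>
        Matrix.toEuclideanLin M₂ (relu (Matrix.toEuclideanLin M₁ x + b₁)) + b₂) y
      = Matrix.toEuclideanLin (M₂ * Matrix.diagonal σ * M₁) (x - y) := by
    have h1 : relu a - relu b = Matrix.toEuclideanLin (Matrix.diagonal σ) (a - b) := by
      ext i
      have : (Matrix.toEuclideanLin (Matrix.diagonal σ) (a - b)) i = σ i * (a i - b i) := by
        simp [Matrix.toEuclideanLin_apply, Matrix.mulVec_diagonal]
      rw [show (relu a - relu b) i = relu a i - relu b i from rfl, this]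
      exact hσeq i
    have h2 : a - b = Matrix.toEuclideanLin M₁ (x - y) := by
      rw [ha, hb, map_sub]; abel
    calc Matrix.toEuclideanLin M₂ (relu a) + b₂ - (Matrix.toEuclideanLin M₂ (relu b) + b₂)
        = Matrix.toEuclideanLin M₂ (relu a - relu b) := by rw [map_sub]; abel
      _ = Matrix.toEuclideanLin M₂
            (Matrix.toEuclideanLin (Matrix.diagonal σ) (Matrix.toEuclideanLin M₁ (x - y))) := by
          rw [h1, h2]
      _ = Matrix.toEuclideanLin (M₂ * Matrix.diagonal σ * M₁) (x - y) := by
          simp only [Matrix.toEuclideanLin_apply, Equiv.apply_symm_apply, Matrix.mulVec_mulVec]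
          rw [Matrix.mul_assoc]
  rw [hkey]
  calc ‖Matrix.toEuclideanLin (M₂ * Matrix.diagonal σ * M₁) (x - y)‖
      ≤ specNorm (M₂ * Matrix.diagonal σ * M₁) * ‖x - y‖ :=
        (LinearMap.toContinuousLinearMap
          (Matrix.toEuclideanLin (M₂ * Matrix.diagonal σ * M₁))).le_opNorm _
    _ ≤ sSup S * ‖x - y‖ := by
        apply mul_le_mul_of_nonneg_right _ (norm_nonneg _)
        exact le_csSup hbdd ⟨σ, hσmem, rfl⟩
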